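/- Characterization of maximally-entangled QCCEs in maximally-entangled games (Appendix D Theorem): Fix real payoff matrices (a_{pq}) and (b_{pq}) indexed by p,q ∈ {0,1}, and let R_1 = Σ_{p,q} a_{pq}·|e_{pq}⟩⟨e_{pq}| and R_2 = Σ_{p,q} b_{pq}·|e_{pq}⟩⟨e_{pq}| where {|e_{pq}⟩} is the Bell basis of ℂ²⊗ℂ². Let (λ_{pq}) be nonnegative reals with Σ_{p,q} λ_{pq} = 1 and set ρ* = Σ_{p,q} λ_{pq}·|e_{pq}⟩⟨e_{pq}|. Then ρ* is a quantum coarse correlated equilibrium of the two-player game with utilities u_1(ρ) = Tr(R_1 ρ), u_2(ρ) = Tr(R_2 ρ) — i.e. Tr(R_1·(ρ_1' ⊗ Tr_A ρ*)) ≤ Tr(R_1·ρ*) for all density matrices ρ_1' on ℂ² and Tr(R_2·((Tr_B ρ*) ⊗ ρ_2')) ≤ Tr(R_2·ρ*) for all density matrices ρ_2' on ℂ², where the second deviated state places ρ_2' on Bob's register — if and only if Σ_{p,q} a_{pq}·λ_{pq} ≥ (1/4)·Σ_{p,q} a_{pq} and Σ_{p,q} b_{pq}·λ_{pq} ≥ (1/4)·Σ_{p,q}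 b_{pq}. -/

import Mathlib

open Matrix Kronecker
open scoped ComplexOrder

/-- A density matrix: positive semidefinite with trace 1. -/
def IsDensity {d : Type*} [Fintype d] (ρ : Matrix d d ℂ) : Prop :=
  ρ.PosSemidef ∧ ρ.trace = 1

/-- The Bell basis vector `|e_{pq}⟩` of `ℂ²⊗ℂ²`:
`e_{pq}(a,b) = (−1)^{q·a}/√2` if `b = a + p` (mod 2), and `0` otherwise. -/
noncomputable def bell (p q : Fin 2) : Fin 2 × Fin 2 → ℂ :=
  fun ab => if ab.2 = ab.1 + p then ((-1 : ℂ) ^ (q.val * ab.1.val)) / (Real.sqrt 2 : ℂ) else 0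

/-- The rank-one projection `|e_{pq}⟩⟨e_{pq}|`. -/
noncomputable def bellProj (p q : Fin 2) :
    Matrix (Fin 2 × Fin 2) (Fin 2 × Fin 2) ℂ :=
  fun x y => bell p q x * (starRingEnd ℂ) (bell p q y)

/-- Partial trace over the first register (the marginal on Bob's register). -/
noncomputable def trA (M : Matrix (Fin 2 × Fin 2) (Fin 2 × Fin 2) ℂ) :
    Matrix (Fin 2) (Fin 2) ℂ :=
  fun b b' => ∑ a, M (a, b) (a, b')

/-- Partial trace over the second register (the marginal on Alice's register). -/
noncomputable def trB (M : Matrix (Fin 2 × Fin 2) (Fin 2 × Fin 2) ℂ) :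
    Matrix (Fin 2) (Fin 2) ℂ :=
  fun a a' => ∑ b, M (a, b) (a', b)

/-!
Bell projections are orthonormal and each has maximally mixed marginals `1/2 • 1`, so for a
Bell-diagonal `ρ*` of unit trace both marginals are `1/2 • 1`. Since
`Tr (M (X ⊗ 1)) = Tr (Tr_B M · X)`, a deviation `ρ' ⊗ 1/2 • 1` earns `Tr (Tr_B R₁ · ρ') / 2`, and
`Tr_B R₁ = (∑ a) / 2 • 1`, so every deviation earns exactly `(∑ a) / 4`, independently of `ρ'`. By
orthonormality the equilibrium payoff is `∑ a · λ`, and the equilibrium condition for each player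
becomes the stated linear inequality.
-/

lemma trA_sum {ι : Type*} (s : Finset ι) (M : ι → Matrix (Fin 2 × Fin 2) (Fin 2 × Fin 2) ℂ) :
    trA (∑ i ∈ s, M i) = ∑ i ∈ s, trA (M i) := by
  ext b b'
  simp only [trA, Matrix.sum_apply]
  exact Finset.sum_comm

lemma trB_sum {ι : Type*} (s : Finset ι) (M : ι → Matrix (Fin 2 × Fin 2) (Fin 2 × Fin 2) ℂ) :
    trB (∑ i ∈ s, M i) = ∑ i ∈ s, trB (M i) := by
  ext a a'
  simp only [trB, Matrix.sum_apply]
  exact Finset.sum_comm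

lemma trA_smul (c : ℂ) (M : Matrix (Fin 2 × Fin 2) (Fin 2 × Fin 2) ℂ) :
    trA (c • M) = c • trA M := by
  ext b b'
  simp only [trA, Matrix.smul_apply, smul_eq_mul, Finset.mul_sum]

lemma trB_smul (c : ℂ) (M : Matrix (Fin 2 × Fin 2) (Fin 2 × Fin 2) ℂ) :
    trB (c • M) = c • trB M := by
  ext a a'
  simp only [trB, Matrix.smul_apply, smul_eq_mul, Finset.mul_sum]

lemma trace_mul_kronecker_one (M : Matrix (Fin 2 × Fin 2) (Fin 2 × Fin 2) ℂ)
    (X : Matrix (Fin 2) (Fin 2) ℂ) : (M * (X ⊗ₖ 1)).trace = (trB M * X).trace := by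
  simp only [trace, diag_apply, mul_apply, kroneckerMap_apply, one_apply, mul_ite, mul_one, mul_zero,
    Fintype.sum_prod_type, Finset.sum_ite_eq', Finset.mem_univ, if_true, Fin.sum_univ_two, trB]
  ring

lemma trace_mul_one_kronecker (M : Matrix (Fin 2 × Fin 2) (Fin 2 × Fin 2) ℂ)
    (Y : Matrix (Fin 2) (Fin 2) ℂ) : (M * (1 ⊗ₖ Y)).trace = (trA M * Y).trace := by
  simp only [trace, diag_apply, mul_apply, kroneckerMap_apply, one_apply, ite_mul, one_mul, zero_mul, mul_ite,
    mul_zero, Fintype.sum_prod_type, Finset.sum_ite_irrel, Fin.sum_univ_two, Fin.isValue, Finset.sum_const_zero,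
    Finset.sum_ite_eq', Finset.mem_univ, ↓reduceIte, trA]
  ring

lemma bellProj_eq_vecMulVec (p q : Fin 2) :
    bellProj p q = vecMulVec (bell p q) (star (bell p q)) := rfl

lemma inv_sqrt_two_mul_self : ((Real.sqrt 2 : ℂ))⁻¹ * (Real.sqrt 2 : ℂ)⁻¹ = 1 / 2 := by
  rw [← mul_inv, ← Complex.ofReal_mul, Real.mul_self_sqrt zero_le_two]; norm_num

lemma star_bell_dotProduct_bell (p q p' q' : Fin 2) :
    star (bell p q) ⬝ᵥ bell p' q' = if p = p' ∧ q = q' then 1 else 0 := by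
  fin_cases p <;> fin_cases q <;> fin_cases p' <;> fin_cases q' <;>
    simp [dotProduct, bell, Fintype.sum_prod_type, div_eq_mul_inv, inv_sqrt_two_mul_self] <;> norm_num

lemma trace_bellProj_mul_bellProj (p q p' q' : Fin 2) :
    (bellProj p q * bellProj p' q').trace = if p = p' ∧ q = q' then 1 else 0 := by
  rw [bellProj_eq_vecMulVec, bellProj_eq_vecMulVec, vecMulVec_mul_vecMulVec, trace_vecMulVec,
    dotProduct_smul, star_bell_dotProduct_bell, smul_eq_mul, dotProduct_comm,
    star_bell_dotProduct_bell]
  aesop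

lemma trA_bellProj (p q : Fin 2) : trA (bellProj p q) = (1 / 2 : ℂ) • 1 := by
  ext b b'
  fin_cases p <;> fin_cases q <;> fin_cases b <;> fin_cases b' <;>
    simp [trA, bellProj, bell, div_eq_mul_inv, inv_sqrt_two_mul_self]

lemma trB_bellProj (p q : Fin 2) : trB (bellProj p q) = (1 / 2 : ℂ) • 1 := by
  ext a a'
  fin_cases p <;> fin_cases q <;> fin_cases a <;> fin_cases a' <;>
    simp [trB, bellProj, bell, div_eq_mul_inv, inv_sqrt_two_mul_self]

noncomputable def bellDiagonal (c : Fin 2 → Fin 2 → ℝ) :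
    Matrix (Fin 2 × Fin 2) (Fin 2 × Fin 2) ℂ :=
  ∑ p, ∑ q, (c p q : ℂ) • bellProj p q

lemma trA_bellDiagonal (c : Fin 2 → Fin 2 → ℝ) :
    trA (bellDiagonal c) = ((∑ p, ∑ q, c p q : ℝ) / 2 : ℂ) • 1 := by
  simp only [bellDiagonal, trA_sum, trA_smul, trA_bellProj, smul_smul, ← Finset.sum_smul]
  congr 1
  push_cast
  simp only [Finset.sum_div, mul_one_div]

lemma trB_bellDiagonal (c : Fin 2 → Fin 2 → ℝ) :
    trB (bellDiagonal c) = ((∑ p, ∑ q, c p q : ℝ) / 2 : ℂ) • 1 := by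
  simp only [bellDiagonal, trB_sum, trB_smul, trB_bellProj, smul_smul, ← Finset.sum_smul]
  congr 1
  push_cast
  simp only [Finset.sum_div, mul_one_div]

lemma trace_bellDiagonal_mul_bellDiagonal (c l : Fin 2 → Fin 2 → ℝ) :
    (bellDiagonal c * bellDiagonal l).trace = (∑ p, ∑ q, c p q * l p q : ℝ) := by
  simp only [bellDiagonal, Finset.sum_mul, Finset.mul_sum, trace_sum, smul_mul_smul_comm, trace_smul,
    trace_bellProj_mul_bellProj, smul_eq_mul, mul_ite, mul_one, mul_zero, ite_and,
    Finset.sum_ite_irrel, Finset.sum_const_zero, Finset.sum_ite_eq', Finset.mem_univ, if_true]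
  norm_cast

lemma trace_bellDiagonal_mul_kronecker_trA (c l : Fin 2 → Fin 2 → ℝ)
    (hl : ∑ p, ∑ q, l p q = 1) (X : Matrix (Fin 2) (Fin 2) ℂ) (hX : X.trace = 1) :
    (bellDiagonal c * (X ⊗ₖ trA (bellDiagonal l))).trace = (1 / 4 * ∑ p, ∑ q, c p q : ℝ) := by
  rw [trA_bellDiagonal, hl, kronecker_smul, mul_smul_comm, trace_smul, trace_mul_kronecker_one,
    trB_bellDiagonal, smul_mul, trace_smul, one_mul, hX]
  push_cast
  ring

lemma trace_bellDiagonal_mul_trB_kronecker (c l : Fin 2 → Fin 2 → ℝ)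
    (hl : ∑ p, ∑ q, l p q = 1) (Y : Matrix (Fin 2) (Fin 2) ℂ) (hY : Y.trace = 1) :
    (bellDiagonal c * (trB (bellDiagonal l) ⊗ₖ Y)).trace = (1 / 4 * ∑ p, ∑ q, c p q : ℝ) := by
  rw [trB_bellDiagonal, hl, smul_kronecker, mul_smul_comm, trace_smul, trace_mul_one_kronecker,
    trA_bellDiagonal, smul_mul, trace_smul, one_mul, hY]
  push_cast
  ring

lemma isDensity_inv_card_smul_one {d : Type*} [Fintype d] [DecidableEq d] [Nonempty d] :
    IsDensity ((Fintype.card d : ℂ)⁻¹ • (1 : Matrix d d ℂ)) :=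
  ⟨PosSemidef.one.smul (inv_nonneg.mpr (Nat.cast_nonneg _)), by simp [trace_smul]⟩

lemma forall_isDensity_imp_le_iff {d : Type*} [Fintype d] [DecidableEq d] [Nonempty d]
    {f : Matrix d d ℂ → ℝ} {c u : ℝ} (hf : ∀ ρ, IsDensity ρ → f ρ = c) :
    (∀ ρ, IsDensity ρ → f ρ ≤ u) ↔ c ≤ u :=
  ⟨fun h => hf _ isDensity_inv_card_smul_one ▸ h _ isDensity_inv_card_smul_one,
    fun h ρ hρ => (hf ρ hρ).symm ▸ h⟩

theorem stmt_13_general (a b : Fin 2 → Fin 2 → ℝ)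
    (lam : Fin 2 → Fin 2 → ℝ)
    (hsum : ∑ p, ∑ q, lam p q = 1) :
    (let R₁ : Matrix (Fin 2 × Fin 2) (Fin 2 × Fin 2) ℂ :=
        ∑ p, ∑ q, (a p q : ℂ) • bellProj p q
     let R₂ : Matrix (Fin 2 × Fin 2) (Fin 2 × Fin 2) ℂ :=
        ∑ p, ∑ q, (b p q : ℂ) • bellProj p q
     let ρstar : Matrix (Fin 2 × Fin 2) (Fin 2 × Fin 2) ℂ :=
        ∑ p, ∑ q, (lam p q : ℂ) • bellProj p q
     ((∀ ρ₁' : Matrix (Fin 2) (Fin 2) ℂ, IsDensity ρ₁' →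
        ((R₁ * (ρ₁' ⊗ₖ trA ρstar)).trace).re ≤ ((R₁ * ρstar).trace).re)
      ∧ (∀ ρ₂' : Matrix (Fin 2) (Fin 2) ℂ, IsDensity ρ₂' →
        ((R₂ * ((trB ρstar) ⊗ₖ ρ₂')).trace).re ≤ ((R₂ * ρstar).trace).re)))
    ↔ ((1 / 4 : ℝ) * ∑ p, ∑ q, a p q ≤ ∑ p, ∑ q, a p q * lam p q
        ∧ (1 / 4 : ℝ) * ∑ p, ∑ q, b p q ≤ ∑ p, ∑ q, b p q * lam p q) := by
  simp only [← bellDiagonal.eq_def]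
  rw [forall_isDensity_imp_le_iff fun ρ hρ => by
      rw [trace_bellDiagonal_mul_kronecker_trA a lam hsum ρ hρ.2, Complex.ofReal_re],
    forall_isDensity_imp_le_iff fun ρ hρ => by
      rw [trace_bellDiagonal_mul_trB_kronecker b lam hsum ρ hρ.2, Complex.ofReal_re],
    trace_bellDiagonal_mul_bellDiagonal, trace_bellDiagonal_mul_bellDiagonal,
    Complex.ofReal_re, Complex.ofReal_re]

/-- Characterization of maximally-entangled QCCEs in maximally-entangled games
(Appendix D Theorem). -/
theorem stmt_13 (a b : Fin 2 → Fin 2 → ℝ)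
    (lam : Fin 2 → Fin 2 → ℝ) (hlam : ∀ p q, 0 ≤ lam p q)
    (hsum : ∑ p, ∑ q, lam p q = 1) :
    (let R₁ : Matrix (Fin 2 × Fin 2) (Fin 2 × Fin 2) ℂ :=
        ∑ p, ∑ q, (a p q : ℂ) • bellProj p q
     let R₂ : Matrix (Fin 2 × Fin 2) (Fin 2 × Fin 2) ℂ :=
        ∑ p, ∑ q, (b p q : ℂ) • bellProj p q
     let ρstar : Matrix (Fin 2 × Fin 2) (Fin 2 × Fin 2) ℂ :=
        ∑ p, ∑ q, (lam p q : ℂ) • bellProj p q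
     ((∀ ρ₁' : Matrix (Fin 2) (Fin 2) ℂ, IsDensity ρ₁' →
        ((R₁ * (ρ₁' ⊗ₖ trA ρstar)).trace).re ≤ ((R₁ * ρstar).trace).re)
      ∧ (∀ ρ₂' : Matrix (Fin 2) (Fin 2) ℂ, IsDensity ρ₂' →
        ((R₂ * ((trB ρstar) ⊗ₖ ρ₂')).trace).re ≤ ((R₂ * ρstar).trace).re)))
    ↔ ((1 / 4 : ℝ) * ∑ p, ∑ q, a p q ≤ ∑ p, ∑ q, a p q * lam p q
        ∧ (1 / 4 : ℝ) * ∑ p, ∑ q, b p q ≤ ∑ p, ∑ q, b p q * lam p q) :=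
  stmt_13_general a b lam hsum
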